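/- Let $X$ be a separable infinite dimensional complex Banach space and $T$ a bounded linear operator on $X$. Suppose there exist a perfect compact set $K \subseteq \mathbb{T}$ and a continuous map $\lambda \mapsto x_\lambda$ from $K$ to $X$ such that $T x_\lambda = \lambda x_\lambda$ for each $\lambda \in K$, and the linear span of $\{x_\lambda : \lambda \in K\}$ is dense in $X$. Then $T$ is hypercyclic, i.e., there exists $x \in X$ whose orbit $\{T^n x : n \ge 0\}$ is dense in $X$. -/

import Mathlib

/-!
By Birkhoff's transitivity theorem it suffices to find, for `u`, `v` in the span of the
eigenvectors and every `δ > 0`, some `z` and `n` with `z` `δ`-close to `u` and `T^n z` `δ`-close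
to `v`. For an eigenvalue `ν ∈ K` pick `ζ ∈ K` so close to `ν` that `x ζ ≈ x ν`; if moreover
`ζ^n ≈ -ν^n`, then `(x ν + x ζ) / 2 ≈ x ν` has small image under `T^n`, while
`(ν⁻ⁿ x ν + ζ⁻ⁿ x ζ) / 2` is small and is mapped to `≈ x ν`. By linearity it remains to find a
common `n` for the finitely many eigenvalues involved. Since `K` is perfect, `ζ / ν` can be taken
with an arbitrarily small nonzero angle `θ`; then `ζ^n ≈ -ν^n` on blocks of about `ε / θ`
consecutive `n` recurring with gaps about `2π / θ`. Choosing the angles one after the other, each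
smaller than the tolerance divided by the gaps of the previous ones, every block of the new
eigenvalue contains an `n` that is good for all the previous ones.
-/

open Set Complex Real Filter Topology

theorem exists_dense_range_of_forall_nonempty_inter_preimage {X : Type*} [TopologicalSpace X]
    [BaireSpace X] [SecondCountableTopology X] [Nonempty X] (φ : ℕ → X → X)
    (hφ : ∀ n, Continuous (φ n))
    (h : ∀ U V : Set X, IsOpen U → IsOpen V → U.Nonempty → V.Nonempty →
      ∃ n, (U ∩ φ n ⁻¹' V).Nonempty) :
    ∃ x, Dense (range fun n ↦ φ n x) := by
  obtain ⟨B, hBc, hBne, hB⟩ := TopologicalSpace.exists_countable_basis X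
  have hdense : Dense (⋂ V ∈ B, ⋃ n, φ n ⁻¹' V) := by
    refine dense_biInter_of_isOpen (fun V hV ↦ ?_) hBc (fun V hV ↦ ?_)
    · exact isOpen_iUnion fun n ↦ (hB.isOpen hV).preimage (hφ n)
    · refine dense_iff_inter_open.2 fun U hU hUne ↦ ?_
      have hVne : V.Nonempty := nonempty_iff_ne_empty.2 fun hVempty ↦ hBne (hVempty ▸ hV)
      obtain ⟨n, z, hzU, hzV⟩ := h U V hU (hB.isOpen hV) hUne hVne
      exact ⟨z, hzU, mem_iUnion.2 ⟨n, hzV⟩⟩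
  obtain ⟨x, hx⟩ := hdense.nonempty
  refine ⟨x, hB.dense_iff.2 fun V hV _ ↦ ?_⟩
  obtain ⟨n, hn⟩ := mem_iUnion.1 (mem_iInter₂.1 hx V hV)
  exact ⟨φ n x, hn, n, rfl⟩

def HasBlocks (S : Set ℕ) (L G : ℕ) : Prop :=
  ∀ a, ∃ b, a ≤ b ∧ b + L ≤ a + G ∧ ∀ k ≤ L, b + k ∈ S

theorem HasBlocks.mono {S S' : Set ℕ} {L G : ℕ} (h : HasBlocks S L G) (hS : S ⊆ S') :
    HasBlocks S' L G := fun a ↦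
  let ⟨b, hab, hbG, hb⟩ := h a
  ⟨b, hab, hbG, fun k hk ↦ hS (hb k hk)⟩

theorem HasBlocks.inter {S T : Set ℕ} {L G : ℕ} (hS : HasBlocks S 0 L) (hT : HasBlocks T L G) :
    HasBlocks (S ∩ T) 0 G := by
  intro a
  obtain ⟨b, hab, hbG, hbT⟩ := hT a
  obtain ⟨n, hbn, hnL, hnS⟩ := hS b
  refine ⟨n, by omega, by omega, fun k hk ↦ ?_⟩
  obtain rfl : k = 0 := by omega
  exact ⟨hnS 0 le_rfl, by simpa [Nat.add_sub_cancel' hbn] using hbT (n - b) (by omega)⟩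

theorem exists_hasBlocks_biInter {ι : Type*} [DecidableEq ι] (S : ι → ℕ → Set ℕ)
    (G : ι → ℕ → ℕ) (hS : ∀ l L, HasBlocks (S l L) L (G l L)) (s : Finset ι) :
    ∃ (L : ι → ℕ) (g : ℕ), HasBlocks (⋂ l ∈ s, S l (L l)) 0 g := by
  induction s using Finset.induction_on with
  | empty => exact ⟨0, 0, fun a ↦ ⟨a, le_rfl, le_rfl, by simp⟩⟩
  | @insert i s hi ih =>
    obtain ⟨L, g, hg⟩ := ih
    refine ⟨Function.update L i g, G i g, ?_⟩
    have hs : (⋂ l ∈ s, S l (Function.update L i g l)) = ⋂ l ∈ s, S l (L l) :=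
      iInter₂_congr fun l hl ↦ by rw [Function.update_of_ne (ne_of_mem_of_not_mem hl hi)]
    rw [Finset.set_biInter_insert, Function.update_self, hs, inter_comm]
    exact hg.inter (hS i g)

theorem norm_exp_mul_I_pow_add_one_le (θ : ℝ) (n : ℕ) (m : ℤ) :
    ‖exp (θ * I) ^ n + 1‖ ≤ |n * θ - (2 * m + 1) * π| := by
  set t := n * θ - (2 * m + 1) * π
  have hexp : exp (θ * I) ^ n = -exp (I * t) := by
    rw [← Complex.exp_nat_mul, show (n : ℂ) * (θ * I) = I * t + (m * (2 * π * I) + π * I) by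
      simp only [t]; push_cast; ring, Complex.exp_add, Complex.exp_add,
      Complex.exp_int_mul_two_pi_mul_I, Complex.exp_pi_mul_I]
    ring
  rw [hexp, neg_add_eq_sub, norm_sub_rev, ← Real.norm_eq_abs]
  exact norm_exp_I_mul_ofReal_sub_one_le

theorem exists_odd_mul_pi_mem_Ico (s : ℝ) :
    ∃ m : ℤ, s ≤ (2 * m + 1) * π ∧ (2 * m + 1) * π < s + 2 * π := by
  refine ⟨⌈(s - π) / (2 * π)⌉, ?_, ?_⟩
  · have := (div_le_iff₀ two_pi_pos).1 (Int.le_ceil ((s - π) / (2 * π)))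
    linarith
  · have := (lt_div_iff₀ two_pi_pos).1
      (sub_lt_iff_lt_add.2 (Int.ceil_lt_add_one ((s - π) / (2 * π))))
    linarith

theorem hasBlocks_exp_mul_I_pow_add_one {θ ε : ℝ} (hθ : 0 < θ) {L : ℕ}
    (hL : (L + 1) * θ ≤ ε) :
    HasBlocks {n | ‖exp (θ * I) ^ n + 1‖ ≤ ε} L (⌈2 * π / θ⌉₊ + L) := by
  intro a
  -- `t` is the first odd multiple of `π` from `a * θ` on, `b` the first `n` with `t ≤ n * θ`.
  obtain ⟨m, ht₁, ht₂⟩ := exists_odd_mul_pi_mem_Ico (a * θ)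
  set t := (2 * m + 1) * π
  have ht₀ : 0 ≤ t := le_trans (by positivity) ht₁
  set b := ⌈t / θ⌉₊
  have hb₁ : t ≤ b * θ := (div_le_iff₀ hθ).1 (Nat.le_ceil _)
  have hb₂ : b * θ < t + θ := by
    have := (sub_lt_iff_lt_add.2 (Nat.ceil_lt_add_one (div_nonneg ht₀ hθ.le)))
    have := (lt_div_iff₀ hθ).1 this
    linarith
  have hab : a ≤ b := by exact_mod_cast le_of_mul_le_mul_right (ht₁.trans hb₁) hθ
  have hbG : b ≤ a + ⌈2 * π / θ⌉₊ := by
    have h : (b : ℝ) < a + 2 * π / θ + 1 := by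
      have : (b - 1 - a : ℝ) < 2 * π / θ := by rw [lt_div_iff₀ hθ]; nlinarith
      linarith
    have : (b : ℝ) < a + ⌈2 * π / θ⌉₊ + 1 := h.trans_le (by gcongr; exact Nat.le_ceil _)
    exact_mod_cast Nat.lt_add_one_iff.1 (by exact_mod_cast this)
  refine ⟨b, hab, by omega, fun k hk ↦ ?_⟩
  have hk' : (k : ℝ) ≤ L := by exact_mod_cast hk
  refine (norm_exp_mul_I_pow_add_one_le θ (b + k) m).trans ?_
  rw [abs_le]; push_cast; constructor <;> nlinarith

theorem norm_exp_neg_mul_I_pow_add_one (θ : ℝ) (n : ℕ) :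
    ‖exp (-θ * I) ^ n + 1‖ = ‖exp (θ * I) ^ n + 1‖ := by
  rw [← RCLike.norm_conj, map_add, map_pow, ← Complex.exp_conj, map_mul, map_neg, conj_ofReal,
    conj_I, map_one, neg_mul_neg]

theorem exists_hasBlocks_pow_add_one {w : ℂ} (hw : ‖w‖ = 1) (hw1 : w ≠ 1) {ε : ℝ} {L : ℕ}
    (hL : (L + 1) * |arg w| ≤ ε) : ∃ G, HasBlocks {n | ‖w ^ n + 1‖ ≤ ε} L G := by
  have hw_exp : exp (arg w * I) = w := by simpa [hw] using norm_mul_exp_arg_mul_I w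
  have harg : 0 < |arg w| := abs_pos.2 fun h ↦ hw1 (by simpa [h] using hw_exp.symm)
  refine ⟨_, (hasBlocks_exp_mul_I_pow_add_one harg hL).mono fun n (hn : ‖_‖ ≤ ε) ↦ ?_⟩
  rcases abs_choice (arg w) with h | h <;> rw [h] at hn
  · rwa [hw_exp] at hn
  · rwa [ofReal_neg, norm_exp_neg_mul_I_pow_add_one, hw_exp] at hn

theorem tendsto_arg_div_nhds_zero {ν : ℂ} (hν : ν ≠ 0) :
    Tendsto (fun ζ ↦ arg (ζ / ν)) (𝓝 ν) (𝓝 0) := by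
  have h1 : Tendsto (fun ζ ↦ ζ / ν) (𝓝 ν) (𝓝 1) := by
    simpa [div_self hν] using (continuous_id.div_const ν).tendsto ν
  have := (continuousAt_arg (by simp [mem_slitPlane_iff])).tendsto.comp h1
  rwa [arg_one] at this

theorem exists_mem_hasBlocks_pow_add_pow {E : Type*} [SeminormedAddCommGroup E] {K : Set ℂ}
    (hK : K ⊆ Metric.sphere 0 1) {ν : ℂ} (hνK : ν ∈ K) (hνacc : AccPt ν (𝓟 K)) {x : ℂ → E}
    (hx : ContinuousWithinAt x K ν) {ε : ℝ} (hε : 0 < ε) (L : ℕ) :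
    ∃ ζ ∈ K, ‖x ζ - x ν‖ ≤ ε ∧ ∃ G, HasBlocks {n | ‖ν ^ n + ζ ^ n‖ * ‖x ζ‖ ≤ ε} L G := by
  have hnorm : ∀ {z}, z ∈ K → ‖z‖ = 1 := fun hz ↦ by simpa using hK hz
  have hν : ‖ν‖ = 1 := hnorm hνK
  have hν0 : ν ≠ 0 := norm_ne_zero_iff.1 (by simp [hν])
  set η := ε / (‖x ν‖ + ε)
  have hη : 0 < η := by positivity
  have harg : ∀ᶠ ζ in 𝓝 ν, (L + 1) * |arg (ζ / ν)| ≤ η := by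
    filter_upwards [(tendsto_arg_div_nhds_zero hν0).eventually
      (Metric.closedBall_mem_nhds 0 (by positivity : 0 < η / (L + 1)))] with ζ hζ
    rw [Real.dist_0_eq_abs, le_div_iff₀ (by positivity)] at hζ
    linarith
  have hxζ : ∀ᶠ ζ in 𝓝 ν, ζ ∈ K → ‖x ζ - x ν‖ ≤ ε := by
    have := hx.eventually (Metric.closedBall_mem_nhds (x ν) hε)
    simpa only [eventually_nhdsWithin_iff, Metric.mem_closedBall, dist_eq_norm] using this
  obtain ⟨ζ, hζK, hζν, hζarg, hxK⟩ := (accPt_iff_frequently_nhdsNE.1 hνacc).and_eventually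
    ((eventually_mem_nhdsWithin (a := ν) (s := {ν}ᶜ)).and
      (nhdsWithin_le_nhds (harg.and hxζ))) |>.exists
  have hζx := hxK hζK
  have hw : ‖ζ / ν‖ = 1 := by rw [norm_div, hν, hnorm hζK, div_one]
  have hw1 : ζ / ν ≠ 1 := fun h ↦ hζν ((div_eq_one_iff_eq hν0).1 h)
  obtain ⟨G, hG⟩ := exists_hasBlocks_pow_add_one hw hw1 hζarg
  refine ⟨ζ, hζK, hζx, G, hG.mono fun n (hn : ‖_‖ ≤ η) ↦ ?_⟩
  have hpow : ‖ν ^ n + ζ ^ n‖ = ‖(ζ / ν) ^ n + 1‖ := by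
    rw [div_pow, div_add_one (pow_ne_zero n hν0), norm_div, norm_pow, hν, one_pow, div_one,
      add_comm]
  have hxζ_le : ‖x ζ‖ ≤ ‖x ν‖ + ε := by
    linarith [norm_le_norm_add_norm_sub' (x ζ) (x ν)]
  calc ‖ν ^ n + ζ ^ n‖ * ‖x ζ‖ ≤ η * (‖x ν‖ + ε) := by rw [hpow]; gcongr
    _ = ε := div_mul_cancel₀ _ (by positivity)

section Graph

variable {𝕜 E : Type*} [RCLike 𝕜] [SeminormedAddCommGroup E] [NormedSpace 𝕜 E]

theorem norm_smul_add_smul_le {α β : 𝕜} {y₁ y₂ : E} {e : ℝ} (hα : ‖α‖ = 1)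
    (hy : ‖y₂ - y₁‖ ≤ e) (hαβ : ‖α + β‖ * ‖y₂‖ ≤ e) : ‖α • y₁ + β • y₂‖ ≤ 2 * e :=
  calc ‖α • y₁ + β • y₂‖ = ‖(α + β) • y₂ - α • (y₂ - y₁)‖ := by congr 1; module
    _ ≤ ‖α + β‖ * ‖y₂‖ + ‖α‖ * ‖y₂ - y₁‖ := by
      simpa only [norm_smul] using norm_sub_le ((α + β) • y₂) (α • (y₂ - y₁))
    _ ≤ 2 * e := by rw [hα]; linarith

theorem norm_inv_two_smul (y : E) : ‖(2 : 𝕜)⁻¹ • y‖ = ‖y‖ / 2 := by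
  rw [norm_smul, norm_inv, RCLike.norm_two, inv_mul_eq_div]

variable (A : E →ₗ[𝕜] E) {α β : 𝕜} {y₁ y₂ : E} {e : ℝ}

theorem LinearMap.exists_mem_graph_norm_inl_sub_le (h₁ : A y₁ = α • y₁) (h₂ : A y₂ = β • y₂)
    (hα : ‖α‖ = 1) (hy : ‖y₂ - y₁‖ ≤ e) (hαβ : ‖α + β‖ * ‖y₂‖ ≤ e) :
    ∃ g ∈ A.graph, ‖(y₁, 0) - g‖ ≤ e := by
  set p : E := (2 : 𝕜)⁻¹ • (y₁ + y₂)
  refine ⟨(p, A p), (A.mem_graph_iff _).2 rfl, norm_prod_le_iff.2 ⟨?_, ?_⟩⟩ <;>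
    simp only [Prod.fst_sub, Prod.snd_sub]
  · have : y₁ - p = (2 : 𝕜)⁻¹ • -(y₂ - y₁) := by simp only [p]; module
    rw [this, norm_inv_two_smul, norm_neg]
    linarith [(norm_nonneg _).trans hy]
  · have : 0 - A p = (2 : 𝕜)⁻¹ • -(α • y₁ + β • y₂) := by
      simp only [p, map_smul, map_add, h₁, h₂]; module
    rw [this, norm_inv_two_smul, norm_neg]
    linarith [norm_smul_add_smul_le hα hy hαβ]

theorem LinearMap.exists_mem_graph_norm_inr_sub_le (h₁ : A y₁ = α • y₁) (h₂ : A y₂ = β • y₂)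
    (hα : ‖α‖ = 1) (hβ : ‖β‖ = 1) (hy : ‖y₂ - y₁‖ ≤ e) (hαβ : ‖α + β‖ * ‖y₂‖ ≤ e) :
    ∃ g ∈ A.graph, ‖(0, y₁) - g‖ ≤ e := by
  have hα0 : α ≠ 0 := norm_ne_zero_iff.1 (by simp [hα])
  have hβ0 : β ≠ 0 := norm_ne_zero_iff.1 (by simp [hβ])
  have hinv : ‖α⁻¹ + β⁻¹‖ = ‖α + β‖ := by
    rw [inv_add_inv hα0 hβ0, norm_div, norm_mul, hα, hβ, mul_one, div_one, add_comm]
  set q : E := (2 : 𝕜)⁻¹ • (α⁻¹ • y₁ + β⁻¹ • y₂)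
  refine ⟨(q, A q), (A.mem_graph_iff _).2 rfl, norm_prod_le_iff.2 ⟨?_, ?_⟩⟩ <;>
    simp only [Prod.fst_sub, Prod.snd_sub]
  · rw [zero_sub, norm_neg, norm_inv_two_smul]
    linarith [norm_smul_add_smul_le (by rw [norm_inv, hα, inv_one]) hy (hinv ▸ hαβ)]
  · have : y₁ - A q = (2 : 𝕜)⁻¹ • -(y₂ - y₁) := by
      simp only [q, map_smul, map_add, h₁, h₂, smul_smul, inv_mul_cancel₀ hα0,
        inv_mul_cancel₀ hβ0]
      module
    rw [this, norm_inv_two_smul, norm_neg]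
    linarith [(norm_nonneg _).trans hy]

end Graph

theorem Submodule.exists_mem_norm_sum_smul_sub_le {𝕜 E ι : Type*} [NormedField 𝕜]
    [SeminormedAddCommGroup E] [NormedSpace 𝕜 E] [Fintype ι] (Γ : Submodule 𝕜 E) (c : ι → 𝕜)
    (w : ι → E) {ε : ℝ} (hw : ∀ i, ∃ g ∈ Γ, ‖w i - g‖ ≤ ε) :
    ∃ g ∈ Γ, ‖∑ i, c i • w i - g‖ ≤ (∑ i, ‖c i‖) * ε := by
  choose g hgΓ hgw using hw
  refine ⟨∑ i, c i • g i, Γ.sum_mem fun i _ ↦ Γ.smul_mem _ (hgΓ i), ?_⟩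
  rw [← Finset.sum_sub_distrib, Finset.sum_mul]
  refine (norm_sum_le _ _).trans (Finset.sum_le_sum fun i _ ↦ ?_)
  rw [← smul_sub, norm_smul]
  exact mul_le_mul_of_nonneg_left (hgw i) (norm_nonneg _)

theorem ContinuousLinearMap.pow_apply_of_eq_smul {R M : Type*} [CommSemiring R]
    [TopologicalSpace M] [AddCommMonoid M] [Module R M] (T : M →L[R] M) {ν : R} {y : M}
    (hy : T y = ν • y) (n : ℕ) : (T ^ n) y = ν ^ n • y := by
  induction n with
  | zero => simp
  | succ n ih => rw [pow_succ, mul_apply_eq_comp, hy, map_smul, ih, smul_smul, pow_succ']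

section Eigen

variable {X : Type*} [NormedAddCommGroup X] [NormedSpace ℂ X] (T : X →L[ℂ] X) {K : Set ℂ}
  {x : ℂ → X}

theorem exists_graph_pow_near_inl_inr (hKsub : K ⊆ Metric.sphere 0 1) (hKperf : Preperfect K)
    (hcont : ContinuousOn x K) (heig : ∀ l ∈ K, T (x l) = l • x l) {ι : Type*} [Fintype ι]
    (ν : ι → ℂ) (hν : ∀ l, ν l ∈ K) {ε : ℝ} (hε : 0 < ε) :
    ∃ n, ∀ l, (∃ g ∈ (↑(T ^ n) : X →ₗ[ℂ] X).graph, ‖(x (ν l), 0) - g‖ ≤ ε) ∧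
      ∃ g ∈ (↑(T ^ n) : X →ₗ[ℂ] X).graph, ‖(0, x (ν l)) - g‖ ≤ ε := by
  classical
  choose ζ hζK hζx G hG using fun l ↦
    exists_mem_hasBlocks_pow_add_pow hKsub (hν l) (hKperf _ (hν l)) (hcont _ (hν l)) hε
  obtain ⟨L, g, hg⟩ := exists_hasBlocks_biInter _ G hG Finset.univ
  obtain ⟨n, -, -, hn⟩ := hg 0
  refine ⟨n, fun l ↦ ?_⟩
  have hpow : ‖ν l ^ n + ζ l (L l) ^ n‖ * ‖x (ζ l (L l))‖ ≤ ε := by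
    simpa using mem_iInter₂.1 (hn 0 le_rfl) l (Finset.mem_univ l)
  have hnorm : ∀ {z : ℂ}, z ∈ K → ‖z ^ n‖ = 1 := fun {z} hz ↦ by
    rw [norm_pow, show ‖z‖ = 1 by simpa using hKsub hz, one_pow]
  have h₁ := T.pow_apply_of_eq_smul (heig _ (hν l)) n
  have h₂ := T.pow_apply_of_eq_smul (heig _ (hζK l (L l))) n
  exact ⟨LinearMap.exists_mem_graph_norm_inl_sub_le _ h₁ h₂ (hnorm (hν l)) (hζx l _) hpow,
    LinearMap.exists_mem_graph_norm_inr_sub_le _ h₁ h₂ (hnorm (hν l)) (hnorm (hζK l _))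
      (hζx l _) hpow⟩

theorem exists_nonempty_inter_preimage_pow (hKsub : K ⊆ Metric.sphere 0 1)
    (hKperf : Preperfect K) (hcont : ContinuousOn x K) (heig : ∀ l ∈ K, T (x l) = l • x l)
    (hdense : Dense (Submodule.span ℂ (x '' K) : Set X)) {U V : Set X} (hU : IsOpen U)
    (hV : IsOpen V) (hUne : U.Nonempty) (hVne : V.Nonempty) :
    ∃ n, (U ∩ ⇑(T ^ n) ⁻¹' V).Nonempty := by
  obtain ⟨u, hu, huU⟩ := hdense.exists_mem_open hU hUne
  obtain ⟨v, hv, hvV⟩ := hdense.exists_mem_open hV hVne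
  obtain ⟨δ, hδ, hball⟩ := Metric.isOpen_iff.1 (hU.prod hV) (u, v) ⟨huU, hvV⟩
  have huv : (u, v) ∈ Submodule.span ℂ
      (LinearMap.inl ℂ X X '' (x '' K) ∪ LinearMap.inr ℂ X X '' (x '' K)) := by
    rw [LinearMap.span_inl_union_inr]
    exact ⟨hu, hv⟩
  obtain ⟨m, c, w, hw⟩ := Submodule.mem_span_set'.1 huv
  have hμ : ∀ k, ∃ μ ∈ K, (w k : X × X) = (x μ, 0) ∨ (w k : X × X) = (0, x μ) := by
    intro k
    rcases (w k).2 with ⟨_, ⟨μ, hμ, rfl⟩, h⟩ | ⟨_, ⟨μ, hμ, rfl⟩, h⟩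
    exacts [⟨μ, hμ, .inl h.symm⟩, ⟨μ, hμ, .inr h.symm⟩]
  choose μ hμK hμw using hμ
  set C := ∑ k, ‖c k‖
  obtain ⟨n, hn⟩ := exists_graph_pow_near_inl_inr T hKsub hKperf hcont heig μ hμK
    (by positivity : 0 < δ / (C + 1))
  obtain ⟨g, hgΓ, hg⟩ := Submodule.exists_mem_norm_sum_smul_sub_le _ c (fun k ↦ (w k : X × X))
    fun k ↦ by rcases hμw k with h | h <;> rw [h]; exacts [(hn k).1, (hn k).2]
  have hgδ : g ∈ Metric.ball (u, v) δ := by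
    rw [Metric.mem_ball, dist_comm, dist_eq_norm, ← hw]
    calc _ ≤ C * (δ / (C + 1)) := hg
      _ < δ := by rw [mul_div_assoc', div_lt_iff₀ (by positivity)]; nlinarith
  obtain ⟨hgU, hgV⟩ := hball hgδ
  exact ⟨n, g.1, hgU, by rwa [(LinearMap.mem_graph_iff _ _).1 hgΓ] at hgV⟩

end Eigen

theorem stmt_12 {X : Type*} [NormedAddCommGroup X] [NormedSpace ℂ X] [CompleteSpace X]
    [TopologicalSpace.SeparableSpace X]
    (T : X →L[ℂ] X) (K : Set ℂ) (hKsub : K ⊆ Metric.sphere (0:ℂ) 1)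
    (hKperf : Perfect K)
    (x : ℂ → X) (hcont : ContinuousOn x K)
    (heig : ∀ l ∈ K, T (x l) = l • x l)
    (hdense : Dense (Submodule.span ℂ (x '' K) : Set X)) :
    ∃ v : X, Dense (Set.range fun n : ℕ => (T ^ n) v) :=
  exists_dense_range_of_forall_nonempty_inter_preimage (fun n ↦ ⇑(T ^ n))
    (fun n ↦ (T ^ n).continuous) fun _ _ hU hV hUne hVne ↦
    exists_nonempty_inter_preimage_pow T hKsub hKperf.acc hcont heig hdense hU hV hUne hVne
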